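/- arXiv:1006.2499 — 9 statements merged into one kernel-verified Lean document; each statement's English description precedes it below -/
import Mathlib

section
/- Let K be a field of characteristic zero, A a K-vector space, μ : A × A → A a bilinear map and α : A → A a linear map. Then (A, μ, α) is a Hom-alternative algebra (i.e., it satisfies both the left Hom-alternative identity μ(α(x), μ(x,y)) = μ(μ(x,x), α(y)) and the right Hom-alternative identity μ(α(x), μ(y,y)) = μ(μ(x,y), α(y)) for all x, y ∈ A) if and only if the Hom-associator as_α is an alternating function of its arguments, that is, as_α(x,y,z) = −as_α(y,x,z) = −as_α(x,z,y) = −as_α(z,y,x) for all x, y, z ∈ A. -/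
/-!
Left Hom-alternativity says exactly that the Hom-associator vanishes on `(x, x, y)`, and right
Hom-alternativity that it vanishes on `(x, y, y)`. Since the Hom-associator is additive in each
argument, polarizing `as (x + y) (x + y) z = 0` shows that vanishing on `(x, x, y)` is equivalent
to antisymmetry in the first two arguments, the converse dividing `2 • as x x y = 0` by `2`.
Likewise for the last two arguments, and antisymmetry in the outer pair follows from the
other two, the transposition `(1 3)` being `(1 2)(2 3)(1 2)`.
-/

section HomAssociator

variable {R M : Type*} [CommRing R] [AddCommGroup M] [Module R M]

def homAssociator (μ : M →ₗ[R] M →ₗ[R] M) (α : M →ₗ[R] M) (x y z : M) : M :=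
  μ (α x) (μ y z) - μ (μ x y) (α z)

variable (μ : M →ₗ[R] M →ₗ[R] M) (α : M →ₗ[R] M)

theorem homAssociator_self_left_eq_zero_iff (x y : M) :
    homAssociator μ α x x y = 0 ↔ μ (α x) (μ x y) = μ (μ x x) (α y) :=
  sub_eq_zero

theorem homAssociator_self_right_eq_zero_iff (x y : M) :
    homAssociator μ α x y y = 0 ↔ μ (α x) (μ y y) = μ (μ x y) (α y) :=
  sub_eq_zero

variable {μ α}

theorem homAssociator_swap_left_of_self_left (h : ∀ x y, homAssociator μ α x x y = 0)
    (x y z : M) : homAssociator μ α x y z = -homAssociator μ α y x z := by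
  have hxy := h (x + y) z
  simp only [homAssociator, map_add, LinearMap.add_apply] at h hxy ⊢
  linear_combination (norm := module) hxy - h x z - h y z

theorem homAssociator_swap_right_of_self_right (h : ∀ x y, homAssociator μ α x y y = 0)
    (x y z : M) : homAssociator μ α x y z = -homAssociator μ α x z y := by
  have hyz := h x (y + z)
  simp only [homAssociator, map_add, LinearMap.add_apply] at h hyz ⊢
  linear_combination (norm := module) hyz - h x y - h x z

variable [IsAddTorsionFree M]

theorem homAssociator_self_left_of_swap_left
    (h : ∀ x y z, homAssociator μ α x y z = -homAssociator μ α y x z) (x y : M) :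
    homAssociator μ α x x y = 0 :=
  self_eq_neg.mp (h x x y)

theorem homAssociator_self_right_of_swap_right
    (h : ∀ x y z, homAssociator μ α x y z = -homAssociator μ α x z y) (x y : M) :
    homAssociator μ α x y y = 0 :=
  self_eq_neg.mp (h x y y)

end HomAssociator

theorem eq_neg_swap_outer_of_eq_neg_swap_left_right {M N : Type*} [AddGroup N]
    {f : M → M → M → N} (hl : ∀ x y z, f x y z = -f y x z) (hr : ∀ x y z, f x y z = -f x z y)
    (x y z : M) : f x y z = -f z y x := by
  rw [hl, hr, hl, neg_neg]

/-- (A, μ, α) is Hom-alternative iff the Hom-associator is an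
alternating function of its arguments. -/
theorem hom_alternative_iff_associator_alternating
    {K : Type*} [Field K] [CharZero K] {A : Type*} [AddCommGroup A] [Module K A]
    (μ : A →ₗ[K] A →ₗ[K] A) (α : A →ₗ[K] A)
    (as : A → A → A → A)
    (has : ∀ x y z : A, as x y z = μ (α x) (μ y z) - μ (μ x y) (α z)) :
    ((∀ x y : A, μ (α x) (μ x y) = μ (μ x x) (α y)) ∧
     (∀ x y : A, μ (α x) (μ y y) = μ (μ x y) (α y))) ↔
    (∀ x y z : A,
      as x y z = - as y x z ∧ as x y z = - as x z y ∧ as x y z = - as z y x) := by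
  obtain rfl : as = homAssociator μ α := funext₃ has
  have : IsAddTorsionFree A := .of_isTorsionFree K A
  simp only [← homAssociator_self_left_eq_zero_iff, ← homAssociator_self_right_eq_zero_iff]
  constructor
  · rintro ⟨hl, hr⟩ x y z
    have hl' := homAssociator_swap_left_of_self_left hl
    have hr' := homAssociator_swap_right_of_self_right hr
    exact ⟨hl' x y z, hr' x y z, eq_neg_swap_outer_of_eq_neg_swap_left_right hl' hr' x y z⟩
  · intro h
    exact ⟨homAssociator_self_left_of_swap_left fun x y z => (h x y z).1,
      homAssociator_self_right_of_swap_right fun x y z => (h x y z).2.1⟩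
end

section
/- Let (A, μ) be a left alternative algebra over a field K of characteristic zero, i.e., μ is bilinear and μ(x, μ(x,y)) = μ(μ(x,x), y) for all x, y ∈ A, and let α : A → A be an algebra endomorphism, i.e., a linear map with α(μ(x,y)) = μ(α(x), α(y)) for all x, y. Set μ_α = α∘μ. Then (A, μ_α, α) is a left Hom-alternative algebra, i.e., μ_α(α(x), μ_α(x,y)) = μ_α(μ_α(x,x), α(y)) for all x, y ∈ A. -/
theorem composition_yields_left_hom_alternative_general
    {K : Type*} [Field K] {A : Type*} [AddCommGroup A] [Module K A]
    (μ : A →ₗ[K] A →ₗ[K] A)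
    (halt : ∀ x y : A, μ x (μ x y) = μ (μ x x) y)
    (α : A →ₗ[K] A) (hα : ∀ x y : A, α (μ x y) = μ (α x) (α y)) :
    ∀ x y : A, α (μ (α x) (α (μ x y))) = α (μ (α (μ x x)) (α y)) := by
  intro x y
  congr 1
  calc μ (α x) (α (μ x y))
      = μ (α x) (μ (α x) (α y)) := by rw [hα]
    _ = μ (μ (α x) (α x)) (α y) := halt _ _
    _ = μ (α (μ x x)) (α y) := by rw [hα]

/-- If (A, μ) is a left alternative algebra and α is an algebra
endomorphism, then (A, α∘μ, α) is a left Hom-alternative algebra. -/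
theorem composition_yields_left_hom_alternative
    {K : Type*} [Field K] [CharZero K] {A : Type*} [AddCommGroup A] [Module K A]
    (μ : A →ₗ[K] A →ₗ[K] A)
    (halt : ∀ x y : A, μ x (μ x y) = μ (μ x x) y)
    (α : A →ₗ[K] A) (hα : ∀ x y : A, α (μ x y) = μ (α x) (α y)) :
    ∀ x y : A, α (μ (α x) (α (μ x y))) = α (μ (α (μ x x)) (α y)) :=
  composition_yields_left_hom_alternative_general μ halt α hα
end

section
/- Let (A, μ, α) be a multiplicative left Hom-alternative algebra over a field K of characteristic zero, i.e., μ(α(x), μ(x,y)) = μ(μ(x,x), α(y)) and α(μ(x,y)) = μ(α(x), α(y)) for all x, y ∈ A. Then for every n ≥ 0, the n-th derived Hom-algebra of type 1, namely (A, μ^(n) = α^n ∘ μ, α^{n+1}), is also a left Hom-alternative algebra: μ^(n)(α^{n+1}(x), μ^(n)(x,y)) = μ^(n)(μ^(n)(x,x), α^{n+1}(y)) for all x, y ∈ A. -/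
lemma pow_mult {K : Type*} [Field K] {A : Type*} [AddCommGroup A] [Module K A]
    (μ : A →ₗ[K] A →ₗ[K] A) (α : A →ₗ[K] A)
    (hmult : ∀ x y : A, α (μ x y) = μ (α x) (α y)) :
    ∀ (n : ℕ) (x y : A), (α ^ n) (μ x y) = μ ((α ^ n) x) ((α ^ n) y) := by
  intro n
  induction n with
  | zero => simp
  | succ n ih =>
    intro x y
    simp only [pow_succ, Module.End.mul_apply, ih, hmult]

/-- The n-th derived Hom-algebra of type 1 of a multiplicative
left Hom-alternative algebra is again left Hom-alternative. -/
theorem derived_hom_algebra_left_hom_alternative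
    {K : Type*} [Field K] [CharZero K] {A : Type*} [AddCommGroup A] [Module K A]
    (μ : A →ₗ[K] A →ₗ[K] A) (α : A →ₗ[K] A)
    (hleft : ∀ x y : A, μ (α x) (μ x y) = μ (μ x x) (α y))
    (hmult : ∀ x y : A, α (μ x y) = μ (α x) (α y)) :
    ∀ (n : ℕ) (x y : A),
      (α ^ n) (μ ((α ^ (n + 1)) x) ((α ^ n) (μ x y))) =
        (α ^ n) (μ ((α ^ n) (μ x x)) ((α ^ (n + 1)) y)) := by
  intro n x y
  congr 1
  have h := pow_mult μ α hmult n
  rw [h x y, h x x]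
  have : ∀ z : A, (α ^ (n + 1)) z = α ((α ^ n) z) := by
    intro z; rw [pow_succ', Module.End.mul_apply]
  rw [this, this, hleft]
end

section
/- Let (A, μ) be a left alternative algebra over a field K of characteristic zero and let α : A → A be an algebra endomorphism. Then for every n ≥ 0, the triple (A, α^{n+1} ∘ μ, α^{n+1}) is a left Hom-alternative algebra. In particular, if α has the form α = id + Σ_{i=1}^p t^i α_i for linear maps α_i and a parameter t ∈ K, these triples are deformations by composition of the left alternative algebra (A, μ) viewed as the Hom-algebra (A, μ, id). -/
lemma pow_hom {K : Type*} [Field K] {A : Type*} [AddCommGroup A] [Module K A]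
    (μ : A →ₗ[K] A →ₗ[K] A) (α : A →ₗ[K] A)
    (hα : ∀ x y : A, α (μ x y) = μ (α x) (α y)) :
    ∀ (k : ℕ) (x y : A), (α ^ k) (μ x y) = μ ((α ^ k) x) ((α ^ k) y) := by
  intro k
  induction k with
  | zero => simp
  | succ n ih =>
    intro x y
    simp only [pow_succ, Module.End.mul_apply]
    rw [hα, ih]

/-- If (A, μ) is a left alternative algebra and α an algebra
endomorphism, then for every n ≥ 0 the triple (A, α^{n+1}∘μ, α^{n+1}) is a
left Hom-alternative algebra. -/
theorem derived_composition_left_hom_alternative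
    {K : Type*} [Field K] [CharZero K] {A : Type*} [AddCommGroup A] [Module K A]
    (μ : A →ₗ[K] A →ₗ[K] A)
    (halt : ∀ x y : A, μ x (μ x y) = μ (μ x x) y)
    (α : A →ₗ[K] A) (hα : ∀ x y : A, α (μ x y) = μ (α x) (α y)) :
    ∀ (n : ℕ) (x y : A),
      (α ^ (n + 1)) (μ ((α ^ (n + 1)) x) ((α ^ (n + 1)) (μ x y))) =
        (α ^ (n + 1)) (μ ((α ^ (n + 1)) (μ x x)) ((α ^ (n + 1)) y)) := by
  intro n x y
  rw [pow_hom μ α hα (n+1) x y, halt, ← pow_hom μ α hα (n+1) x x]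
end

section
/- Let K be a field of characteristic zero and let A = K⁴ with basis {e₀, e₁, e₂, e₃} carry the alternative (non-associative) multiplication μ_{4,1} given by μ(e₀,e₀)=e₀, μ(e₀,e₁)=e₁, μ(e₂,e₀)=e₂, μ(e₂,e₃)=e₁, μ(e₃,e₀)=e₃, μ(e₃,e₂)=−e₁, all other products of basis vectors being zero. For any parameters a₁, …, a₇ ∈ K, the linear map α : A → A defined by α(e₀)=e₀+a₁e₁+a₂e₂+a₃e₃, α(e₁)=(1−a₄a₅+a₆+a₇+a₆a₇)e₁, α(e₂)=(a₃−a₂a₅+a₃a₆)e₁+(1+a₆)e₂+a₅e₃, α(e₃)=(−a₂+a₃a₄−a₂a₇)e₁+a₄e₂+(1+a₇)e₃, is an algebra endomorphism of (A, μ_{4,1}); consequently (A, α∘μ_{4,1}, α) is a Hom-alternative algebra. -/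
/-!
In coordinates, μ₄₁(x, y) = (x₀y₀, x₀y₁ + x₂y₃ − x₃y₂, x₂y₀, x₃y₀), so both the alternative laws
of μ₄₁ and the identity α(μ₄₁(x, y)) = μ₄₁(αx, αy) for the matrix of α are polynomial
identities in the coordinates. Twisting an alternative algebra along an endomorphism α yields
a Hom-alternative algebra: α(μ(αx, α(μ(x, y)))) = α(μ(αx, μ(αx, αy))) = α(μ(μ(αx, αx), αy)),
and similarly on the right.
-/

section HomAlternative

variable {A : Type*}

def IsAlternative (μ : A → A → A) : Prop :=
  (∀ x y, μ x (μ x y) = μ (μ x x) y) ∧ ∀ x y, μ x (μ y y) = μ (μ x y) y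

def IsHomAlternative (μ : A → A → A) (α : A → A) : Prop :=
  (∀ x y, μ (α x) (μ x y) = μ (μ x x) (α y)) ∧ ∀ x y, μ (α x) (μ y y) = μ (μ x y) (α y)

theorem IsAlternative.isHomAlternative_comp {μ : A → A → A} {α : A → A} (hμ : IsAlternative μ)
    (hα : ∀ x y, α (μ x y) = μ (α x) (α y)) :
    IsHomAlternative (fun x y => α (μ x y)) α := by
  constructor <;> intro x y <;> dsimp only
  · rw [hα x y, hα x x, hμ.1]
  · rw [hα x y, hα y y, hμ.2]

end HomAlternative

open Matrix

namespace Mu41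

variable {K : Type*} [CommRing K]

def mul : (Fin 4 → K) →ₗ[K] (Fin 4 → K) →ₗ[K] (Fin 4 → K) :=
  LinearMap.mk₂ K (fun x y => ![x 0 * y 0, x 0 * y 1 + x 2 * y 3 - x 3 * y 2, x 2 * y 0, x 3 * y 0])
    (fun _ _ _ => by ext i; fin_cases i <;> simp <;> ring)
    (fun _ _ _ => by ext i; fin_cases i <;> simp <;> ring)
    (fun _ _ _ => by ext i; fin_cases i <;> simp <;> ring)
    (fun _ _ _ => by ext i; fin_cases i <;> simp <;> ring)

theorem mul_apply (x y : Fin 4 → K) :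
    mul x y = ![x 0 * y 0, x 0 * y 1 + x 2 * y 3 - x 3 * y 2, x 2 * y 0, x 3 * y 0] := rfl

theorem mul_single_single (i j : Fin 4) :
    mul (Pi.single i (1 : K)) (Pi.single j 1) =
      ![![Pi.single 0 1, Pi.single 1 1, 0, 0],
        ![0, 0, 0, 0],
        ![Pi.single 2 1, 0, 0, Pi.single 1 1],
        ![Pi.single 3 1, 0, -Pi.single 1 1, 0]] i j := by
  fin_cases i <;> fin_cases j <;> ext k <;> fin_cases k <;> simp [mul_apply]

theorem isAlternative_mul : IsAlternative fun x y : Fin 4 → K => mul x y := by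
  constructor <;> intro x y <;> ext i <;> fin_cases i <;> simp [mul_apply] <;> ring

def endMatrix (a₁ a₂ a₃ a₄ a₅ a₆ a₇ : K) : Matrix (Fin 4) (Fin 4) K :=
  !![1, 0, 0, 0;
    a₁, 1 - a₄ * a₅ + a₆ + a₇ + a₆ * a₇, a₃ - a₂ * a₅ + a₃ * a₆, -a₂ + a₃ * a₄ - a₂ * a₇;
    a₂, 0, 1 + a₆, a₄;
    a₃, 0, a₅, 1 + a₇]

theorem toLin'_endMatrix_mul (a₁ a₂ a₃ a₄ a₅ a₆ a₇ : K) (x y : Fin 4 → K) :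
    toLin' (endMatrix a₁ a₂ a₃ a₄ a₅ a₆ a₇) (mul x y) =
      mul (toLin' (endMatrix a₁ a₂ a₃ a₄ a₅ a₆ a₇) x) (toLin' (endMatrix a₁ a₂ a₃ a₄ a₅ a₆ a₇) y) := by
  ext i
  fin_cases i <;> simp [mul_apply, endMatrix, mulVec, dotProduct, Fin.sum_univ_four] <;> ring

end Mu41

theorem mu41_endomorphism_family_general
    {K : Type*} [Field K]
    (μ : (Fin 4 → K) →ₗ[K] (Fin 4 → K) →ₗ[K] (Fin 4 → K))
    (α : (Fin 4 → K) →ₗ[K] (Fin 4 → K))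
    (a₁ a₂ a₃ a₄ a₅ a₆ a₇ : K)
    (e : Fin 4 → (Fin 4 → K)) (he : ∀ i, e i = Pi.single i 1)
    (hμ : ∀ i j, μ (e i) (e j) =
      ![![e 0, e 1, 0, 0],
        ![0, 0, 0, 0],
        ![e 2, 0, 0, e 1],
        ![e 3, 0, -(e 1), 0]] i j)
    (hα0 : α (e 0) = e 0 + a₁ • e 1 + a₂ • e 2 + a₃ • e 3)
    (hα1 : α (e 1) = (1 - a₄ * a₅ + a₆ + a₇ + a₆ * a₇) • e 1)
    (hα2 : α (e 2) = (a₃ - a₂ * a₅ + a₃ * a₆) • e 1 + (1 + a₆) • e 2 + a₅ • e 3)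
    (hα3 : α (e 3) = (-a₂ + a₃ * a₄ - a₂ * a₇) • e 1 + a₄ • e 2 + (1 + a₇) • e 3) :
    (∀ x y, α (μ x y) = μ (α x) (α y)) ∧
    (∀ x y, α (μ (α x) (α (μ x y))) = α (μ (α (μ x x)) (α y))) ∧
    (∀ x y, α (μ (α x) (α (μ y y))) = α (μ (α (μ x y)) (α y))) := by
  obtain rfl : e = fun i => Pi.single i 1 := funext he
  obtain rfl : μ = Mu41.mul :=
    LinearMap.ext_basis (Pi.basisFun K _) (Pi.basisFun K _) fun i j => by
      simpa only [Pi.basisFun_apply, Mu41.mul_single_single] using hμ i j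
  obtain rfl : α = toLin' (Mu41.endMatrix a₁ a₂ a₃ a₄ a₅ a₆ a₇) :=
    (Pi.basisFun K (Fin 4)).ext fun j => by
      fin_cases j <;> ext k <;> fin_cases k <;> simp [hα0, hα1, hα2, hα3, Mu41.endMatrix]
  have hend := Mu41.toLin'_endMatrix_mul a₁ a₂ a₃ a₄ a₅ a₆ a₇
  exact ⟨hend, Mu41.isAlternative_mul.isHomAlternative_comp hend⟩

/-- On the 4-dimensional alternative algebra μ₄₁, the family of
linear maps α (depending on parameters a₁,…,a₇) is an algebra endomorphism, and
hence (A, α∘μ, α) is a Hom-alternative algebra. -/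
theorem mu41_endomorphism_family
    {K : Type*} [Field K] [CharZero K]
    (μ : (Fin 4 → K) →ₗ[K] (Fin 4 → K) →ₗ[K] (Fin 4 → K))
    (α : (Fin 4 → K) →ₗ[K] (Fin 4 → K))
    (a₁ a₂ a₃ a₄ a₅ a₆ a₇ : K)
    (e : Fin 4 → (Fin 4 → K)) (he : ∀ i, e i = Pi.single i 1)
    (hμ : ∀ i j, μ (e i) (e j) =
      ![![e 0, e 1, 0, 0],
        ![0, 0, 0, 0],
        ![e 2, 0, 0, e 1],
        ![e 3, 0, -(e 1), 0]] i j)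
    (hα0 : α (e 0) = e 0 + a₁ • e 1 + a₂ • e 2 + a₃ • e 3)
    (hα1 : α (e 1) = (1 - a₄ * a₅ + a₆ + a₇ + a₆ * a₇) • e 1)
    (hα2 : α (e 2) = (a₃ - a₂ * a₅ + a₃ * a₆) • e 1 + (1 + a₆) • e 2 + a₅ • e 3)
    (hα3 : α (e 3) = (-a₂ + a₃ * a₄ - a₂ * a₇) • e 1 + a₄ • e 2 + (1 + a₇) • e 3) :
    (∀ x y, α (μ x y) = μ (α x) (α y)) ∧
    (∀ x y, α (μ (α x) (α (μ x y))) = α (μ (α (μ x x)) (α y))) ∧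
    (∀ x y, α (μ (α x) (α (μ y y))) = α (μ (α (μ x y)) (α y))) :=
  mu41_endomorphism_family_general μ α a₁ a₂ a₃ a₄ a₅ a₆ a₇ e he hμ hα0 hα1 hα2 hα3
end

section
/- Let K be a field of characteristic zero and let A = K⁴ with basis {e₀, e₁, e₂, e₃} carry the multiplication μ_{4,1} given by μ(e₀,e₀)=e₀, μ(e₀,e₁)=e₁, μ(e₂,e₀)=e₂, μ(e₂,e₃)=e₁, μ(e₃,e₀)=e₃, μ(e₃,e₂)=−e₁, all other products of basis vectors being zero. A linear map f : A → A is a derivation of (A, μ_{4,1}), i.e., f(μ(x,y)) = μ(f(x), y) + μ(x, f(y)) for all x, y ∈ A, if and only if there exist b₁, …, b₇ ∈ K such that f(e₀)=b₁e₁+b₂e₂+b₃e₃, f(e₁)=(b₄+b₅)e₁, f(e₂)=b₃e₁+b₄e₂+b₆e₃, f(e₃)=−b₂e₁+b₇e₂+b₅e₃. -/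
/-!
The derivation identity is bilinear in `(x, y)`, so it holds everywhere once it holds on pairs of
basis vectors. Nine coordinates of these basis identities (for the products `e₀e₀`, `e₁e₀`,
`e₀e₂`, `e₀e₃`, `e₂e₃`) already force the stated shape of `f`, and conversely a map of that shape
satisfies all sixteen basis identities by direct computation.
-/

open Module

section

variable {R M : Type*} [CommRing R] [AddCommGroup M] [Module R M]

def IsDerivation (μ : M →ₗ[R] M →ₗ[R] M) (f : M →ₗ[R] M) : Prop :=
  ∀ x y, f (μ x y) = μ (f x) y + μ x (f y)

theorem isDerivation_iff_basis {ι : Type*} (b : Basis ι R M) {μ : M →ₗ[R] M →ₗ[R] M}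
    {f : M →ₗ[R] M} :
    IsDerivation μ f ↔ ∀ i j, f (μ (b i) (b j)) = μ (f (b i)) (b j) + μ (b i) (f (b j)) := by
  refine ⟨fun h i j => h _ _, fun h x y => ?_⟩
  have : μ.compr₂ f = μ ∘ₗ f + μ.compl₂ f := LinearMap.ext_basis b b h
  exact LinearMap.congr_fun₂ this x y

section Mu41

variable {μ : M →ₗ[R] M →ₗ[R] M} (e : Basis (Fin 4) R M)
  (hμ : ∀ i j, μ (e i) (e j) =
      ![![e 0, e 1, 0, 0],
        ![0, 0, 0, 0],
        ![e 2, 0, 0, e 1],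
        ![e 3, 0, -(e 1), 0]] i j)
include hμ

theorem mu41_repr_apply (x y : M) (k : Fin 4) :
    e.repr (μ x y) k =
      ![e.repr x 0 * e.repr y 0,
        e.repr x 0 * e.repr y 1 + e.repr x 2 * e.repr y 3 - e.repr x 3 * e.repr y 2,
        e.repr x 2 * e.repr y 0,
        e.repr x 3 * e.repr y 0] k := by
  conv_lhs => rw [← e.sum_repr x, ← e.sum_repr y]
  simp only [Fin.sum_univ_four, map_add, map_smul, LinearMap.add_apply, LinearMap.smul_apply, hμ]
  fin_cases k <;> simp <;> ring

theorem exists_params_of_isDerivation_mu41 {f : M →ₗ[R] M} (hf : IsDerivation μ f) :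
    ∃ b₁ b₂ b₃ b₄ b₅ b₆ b₇ : R,
      f (e 0) = b₁ • e 1 + b₂ • e 2 + b₃ • e 3 ∧
      f (e 1) = (b₄ + b₅) • e 1 ∧
      f (e 2) = b₃ • e 1 + b₄ • e 2 + b₆ • e 3 ∧
      f (e 3) = -b₂ • e 1 + b₇ • e 2 + b₅ • e 3 := by
  have coord (i j k : Fin 4) := congrArg (e.repr · k) (hf (e i) (e j))
  have e000 := coord 0 0 0
  have e100 := coord 1 0 0
  have e102 := coord 1 0 2
  have e103 := coord 1 0 3
  have e020 := coord 0 2 0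
  have e021 := coord 0 2 1
  have e030 := coord 0 3 0
  have e031 := coord 0 3 1
  have e231 := coord 2 3 1
  simp [hμ, mu41_repr_apply e hμ] at e000 e100 e102 e103 e020 e021 e030 e031 e231
  refine ⟨e.repr (f (e 0)) 1, e.repr (f (e 0)) 2, e.repr (f (e 0)) 3, e.repr (f (e 2)) 2,
    e.repr (f (e 3)) 3, e.repr (f (e 2)) 3, e.repr (f (e 3)) 2, ?_, ?_, ?_, ?_⟩ <;>
  refine e.ext_elem fun k => ?_ <;> fin_cases k <;> simp <;> grind

theorem isDerivation_mu41_of_params {f : M →ₗ[R] M} {b₁ b₂ b₃ b₄ b₅ b₆ b₇ : R}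
    (h₀ : f (e 0) = b₁ • e 1 + b₂ • e 2 + b₃ • e 3) (h₁ : f (e 1) = (b₄ + b₅) • e 1)
    (h₂ : f (e 2) = b₃ • e 1 + b₄ • e 2 + b₆ • e 3)
    (h₃ : f (e 3) = -b₂ • e 1 + b₇ • e 2 + b₅ • e 3) :
    IsDerivation μ f := by
  refine (isDerivation_iff_basis e).2 fun i j => ?_
  fin_cases i <;> fin_cases j <;> simp [hμ, h₀, h₁, h₂, h₃] <;> module

theorem isDerivation_mu41_iff (f : M →ₗ[R] M) :
    IsDerivation μ f ↔
      ∃ b₁ b₂ b₃ b₄ b₅ b₆ b₇ : R,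
        f (e 0) = b₁ • e 1 + b₂ • e 2 + b₃ • e 3 ∧
        f (e 1) = (b₄ + b₅) • e 1 ∧
        f (e 2) = b₃ • e 1 + b₄ • e 2 + b₆ • e 3 ∧
        f (e 3) = -b₂ • e 1 + b₇ • e 2 + b₅ • e 3 :=
  ⟨exists_params_of_isDerivation_mu41 e hμ,
    fun ⟨_, _, _, _, _, _, _, h₀, h₁, h₂, h₃⟩ => isDerivation_mu41_of_params e hμ h₀ h₁ h₂ h₃⟩

end Mu41

end

theorem mu41_derivations_general
    {K : Type*} [Field K]
    (μ : (Fin 4 → K) →ₗ[K] (Fin 4 → K) →ₗ[K] (Fin 4 → K))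
    (e : Fin 4 → (Fin 4 → K)) (he : ∀ i, e i = Pi.single i 1)
    (hμ : ∀ i j, μ (e i) (e j) =
      ![![e 0, e 1, 0, 0],
        ![0, 0, 0, 0],
        ![e 2, 0, 0, e 1],
        ![e 3, 0, -(e 1), 0]] i j)
    (f : (Fin 4 → K) →ₗ[K] (Fin 4 → K)) :
    (∀ x y, f (μ x y) = μ (f x) y + μ x (f y)) ↔
    (∃ b₁ b₂ b₃ b₄ b₅ b₆ b₇ : K,
      f (e 0) = b₁ • e 1 + b₂ • e 2 + b₃ • e 3 ∧
      f (e 1) = (b₄ + b₅) • e 1 ∧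
      f (e 2) = b₃ • e 1 + b₄ • e 2 + b₆ • e 3 ∧
      f (e 3) = -b₂ • e 1 + b₇ • e 2 + b₅ • e 3) := by
  obtain rfl : e = Pi.basisFun K (Fin 4) := funext fun i => by simp [he]
  exact isDerivation_mu41_iff _ hμ f

/-- A linear map f is a derivation of the 4-dimensional
alternative algebra μ₄₁ iff it has the stated form with parameters b₁,…,b₇. -/
theorem mu41_derivations
    {K : Type*} [Field K] [CharZero K]
    (μ : (Fin 4 → K) →ₗ[K] (Fin 4 → K) →ₗ[K] (Fin 4 → K))
    (e : Fin 4 → (Fin 4 → K)) (he : ∀ i, e i = Pi.single i 1)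
    (hμ : ∀ i j, μ (e i) (e j) =
      ![![e 0, e 1, 0, 0],
        ![0, 0, 0, 0],
        ![e 2, 0, 0, e 1],
        ![e 3, 0, -(e 1), 0]] i j)
    (f : (Fin 4 → K) →ₗ[K] (Fin 4 → K)) :
    (∀ x y, f (μ x y) = μ (f x) y + μ x (f y)) ↔
    (∃ b₁ b₂ b₃ b₄ b₅ b₆ b₇ : K,
      f (e 0) = b₁ • e 1 + b₂ • e 2 + b₃ • e 3 ∧
      f (e 1) = (b₄ + b₅) • e 1 ∧
      f (e 2) = b₃ • e 1 + b₄ • e 2 + b₆ • e 3 ∧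
      f (e 3) = -b₂ • e 1 + b₇ • e 2 + b₅ • e 3) :=
  mu41_derivations_general μ e he hμ f
end

section
/- Let (A, [·,·]) be a Malcev algebra over a field K of characteristic zero, i.e., [·,·] is a skew-symmetric bilinear map satisfying J(x,y,[x,z]) = [J(x,y,z), x] for all x, y, z ∈ A, where J(x,y,z) = [[x,y],z] + [[y,z],x] + [[z,x],y], and let α : A → A be an algebra endomorphism, i.e., a linear map with α([x,y]) = [α(x), α(y)] for all x, y. Then the Hom-algebra (A, α∘[·,·], α) induced by α is a Hom-Malcev algebra. -/
/-!
Twisting by `α` commutes with forming Jacobiators: the Hom-Jacobiator of `α ∘ [·,·]`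
is `α² ∘ J`, and `α` maps `J(x, y, z)` to `J(α x, α y, α z)`. Applying `α²` to the Malcev
identity at `(α x, α y, α z)` therefore gives the Hom-Malcev identity of the twisted algebra.
-/

section HomMalcev

variable {A : Type*} [AddCommMonoid A]

def homJacobiator (μ : A → A → A) (α : A → A) (x y z : A) : A :=
  μ (μ x y) (α z) + μ (μ y z) (α x) + μ (μ z x) (α y)

/-- With `α = id` this is the Malcev identity. -/
def IsHomMalcev (μ : A → A → A) (α : A → A) : Prop :=
  ∀ x y z, homJacobiator μ α (α x) (α y) (μ x z) = μ (homJacobiator μ α x y z) (α (α x))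

variable (μ : A → A → A) (α : A →+ A) (hα : ∀ x y, α (μ x y) = μ (α x) (α y))
include hα

theorem map_homJacobiator_id (x y z : A) :
    α (homJacobiator μ id x y z) = homJacobiator μ id (α x) (α y) (α z) := by
  simp only [homJacobiator, id, map_add, hα]

theorem homJacobiator_twist (x y z : A) :
    homJacobiator (fun x y ↦ α (μ x y)) α x y z = α (α (homJacobiator μ id x y z)) := by
  simp only [homJacobiator, id, map_add, hα]

theorem IsHomMalcev.twist (h : IsHomMalcev μ id) : IsHomMalcev (fun x y ↦ α (μ x y)) α := by
  intro x y z
  calc homJacobiator (fun x y ↦ α (μ x y)) α (α x) (α y) (α (μ x z))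
      = α (α (homJacobiator μ id (α x) (α y) (μ (α x) (α z)))) := by
        rw [homJacobiator_twist μ α hα, hα]
    _ = α (α (μ (homJacobiator μ id (α x) (α y) (α z)) (α x))) :=
        congrArg (fun v ↦ α (α v)) (h (α x) (α y) (α z))
    _ = α (μ (α (α (homJacobiator μ id x y z))) (α (α x))) := by
        rw [← map_homJacobiator_id μ α hα, hα, hα]
    _ = α (μ (homJacobiator (fun x y ↦ α (μ x y)) α x y z) (α (α x))) := by
        rw [homJacobiator_twist μ α hα]

end HomMalcev

theorem malcev_composition_is_hom_malcev_general
    {K : Type*} [Field K] {A : Type*} [AddCommGroup A] [Module K A]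
    (br : A →ₗ[K] A →ₗ[K] A)
    (J : A → A → A → A)
    (hJ : ∀ x y z : A, J x y z = br (br x y) z + br (br y z) x + br (br z x) y)
    (hmalcev : ∀ x y z : A, J x y (br x z) = br (J x y z) x)
    (α : A →ₗ[K] A) (hα : ∀ x y : A, α (br x y) = br (α x) (α y))
    (nb : A → A → A) (hnb : ∀ x y : A, nb x y = α (br x y))
    (NJ : A → A → A → A)
    (hNJ : ∀ x y z : A,
      NJ x y z = nb (nb x y) (α z) + nb (nb y z) (α x) + nb (nb z x) (α y)) :
    ∀ x y z : A, NJ (α x) (α y) (nb x z) = nb (NJ x y z) (α (α x)) := by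
  obtain rfl : J = homJacobiator (fun x y ↦ br x y) id := funext₃ hJ
  obtain rfl : NJ = homJacobiator nb α := funext₃ hNJ
  obtain rfl : nb = fun x y ↦ α (br x y) := funext₂ hnb
  exact IsHomMalcev.twist (fun x y ↦ br x y) α.toAddMonoidHom hα hmalcev

/-- Composing the bracket of a Malcev algebra with an algebra
endomorphism α yields a Hom-Malcev algebra (A, α∘[·,·], α). -/
theorem malcev_composition_is_hom_malcev
    {K : Type*} [Field K] [CharZero K] {A : Type*} [AddCommGroup A] [Module K A]
    (br : A →ₗ[K] A →ₗ[K] A)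
    (hskew : ∀ x y : A, br x y = - br y x)
    (J : A → A → A → A)
    (hJ : ∀ x y z : A, J x y z = br (br x y) z + br (br y z) x + br (br z x) y)
    (hmalcev : ∀ x y z : A, J x y (br x z) = br (J x y z) x)
    (α : A →ₗ[K] A) (hα : ∀ x y : A, α (br x y) = br (α x) (α y))
    (nb : A → A → A) (hnb : ∀ x y : A, nb x y = α (br x y))
    (NJ : A → A → A → A)
    (hNJ : ∀ x y z : A,
      NJ x y z = nb (nb x y) (α z) + nb (nb y z) (α x) + nb (nb z x) (α y)) :
    ∀ x y z : A, NJ (α x) (α y) (nb x z) = nb (NJ x y z) (α (α x)) :=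
  malcev_composition_is_hom_malcev_general br J hJ hmalcev α hα nb hnb NJ hNJ
end

section
/- Let (A, [·,·], α) be a multiplicative Hom-Malcev algebra over a field K of characteristic zero, i.e., [·,·] is skew-symmetric bilinear, α([x,y]) = [α(x), α(y)] for all x, y, and the Hom-Malcev identity J_α(α(x), α(y), [x,z]) = [J_α(x,y,z), α²(x)] holds for all x, y, z. Then for every n ≥ 0, the n-th derived Hom-algebra of type 2, namely (A, [·,·]^(n) = α^{2ⁿ−1}∘[·,·], α^{2ⁿ}), is also a Hom-Malcev algebra. -/
/-- The n-th derived Hom-algebra of type 2 of a multiplicative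
Hom-Malcev algebra, namely (A, α^{2ⁿ-1}∘[·,·], α^{2ⁿ}), is again a Hom-Malcev
algebra. -/
theorem derived_hom_malcev_type_two
    {K : Type*} [Field K] [CharZero K] {A : Type*} [AddCommGroup A] [Module K A]
    (br : A →ₗ[K] A →ₗ[K] A) (α : A →ₗ[K] A)
    (hskew : ∀ x y : A, br x y = - br y x)
    (hmult : ∀ x y : A, α (br x y) = br (α x) (α y))
    (J : A → A → A → A)
    (hJ : ∀ x y z : A,
      J x y z = br (br x y) (α z) + br (br y z) (α x) + br (br z x) (α y))
    (hmalcev : ∀ x y z : A, J (α x) (α y) (br x z) = br (J x y z) (α (α x)))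
    (bn : ℕ → A → A → A)
    (hbn : ∀ (n : ℕ) (x y : A), bn n x y = (α ^ (2 ^ n - 1)) (br x y))
    (Jn : ℕ → A → A → A → A)
    (hJn : ∀ (n : ℕ) (x y z : A),
      Jn n x y z = bn n (bn n x y) ((α ^ 2 ^ n) z) + bn n (bn n y z) ((α ^ 2 ^ n) x)
        + bn n (bn n z x) ((α ^ 2 ^ n) y)) :
    ∀ (n : ℕ) (x y z : A),
      (∀ u v : A, bn n u v = - bn n v u) ∧
      Jn n ((α ^ 2 ^ n) x) ((α ^ 2 ^ n) y) (bn n x z) =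
        bn n (Jn n x y z) ((α ^ 2 ^ n) ((α ^ 2 ^ n) x)) := by
  -- powers of α are multiplicative
  have hpm : ∀ (k : ℕ) (u v : A), (α ^ k) (br u v) = br ((α ^ k) u) ((α ^ k) v) := by
    intro k
    induction k with
    | zero => intro u v; simp
    | succ k ih =>
      intro u v
      simp only [pow_succ, Module.End.mul_apply]
      rw [hmult, ih]
  -- α commutes with its powers
  have hcomm : ∀ (k : ℕ) (w : A), (α ^ k) (α w) = α ((α ^ k) w) := by
    intro k w
    rw [← Module.End.mul_apply, ← pow_succ, pow_succ', Module.End.mul_apply]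
  intro n x y z
  set m := 2 ^ n - 1 with hm
  have hN : 2 ^ n = m + 1 := (Nat.sub_add_cancel (Nat.one_le_two_pow)).symm
  have hαN : ∀ w : A, (α ^ 2 ^ n) w = (α ^ m) (α w) := by
    intro w; rw [hN, pow_succ, Module.End.mul_apply]
  -- key computation for the bracket of brackets
  have key : ∀ u v w : A,
      bn n (bn n u v) ((α ^ 2 ^ n) w) = (α ^ m) ((α ^ m) (br (br u v) (α w))) := by
    intro u v w
    rw [hbn, hbn, ← hm, hαN]
    simp only [hpm]
  -- Jn in terms of J
  have hJn' : ∀ u v w : A, Jn n u v w = (α ^ m) ((α ^ m) (J u v w)) := by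
    intro u v w
    rw [hJn, key, key, key, hJ, map_add, map_add, map_add, map_add]
  -- J commutes with α
  have hJα : ∀ u v w : A, α (J u v w) = J (α u) (α v) (α w) := by
    intro u v w
    rw [hJ, hJ]
    simp only [map_add, hmult]
  have hJαk : ∀ (k : ℕ) (u v w : A),
      (α ^ k) (J u v w) = J ((α ^ k) u) ((α ^ k) v) ((α ^ k) w) := by
    intro k
    induction k with
    | zero => intro u v w; simp
    | succ k ih =>
      intro u v w
      simp only [pow_succ, Module.End.mul_apply]
      rw [hJα, ih]
  constructor
  · intro u v
    rw [hbn, hbn, ← hm, hskew u v, map_neg]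
  · -- main identity
    rw [hJn', hbn, ← hm, hJn']
    rw [hαN x, hαN y, hbn, ← hm, ← hJαk, hmalcev]
    rw [hαN]
    simp only [hpm, hcomm]
end

section
/- Let (A, [·,·]) be a Malcev algebra over a field K of characteristic zero and let α : A → A be an algebra endomorphism, i.e., α([x,y]) = [α(x), α(y)] for all x, y ∈ A. Then for every n ≥ 0, the triple (A, α^{2ⁿ}∘[·,·], α^{2ⁿ}) is a Hom-Malcev algebra. In particular, when α = id + Σ_{i=1}^p t^i α_i for linear maps α_i and a parameter t ∈ K, these triples are deformations by composition of the Malcev algebra (A, [·,·]) viewed as the Hom-Malcev algebra (A, [·,·], id). -/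
/-- If (A, [·,·]) is a Malcev algebra and α an algebra
endomorphism, then for every n ≥ 0 the triple (A, α^{2ⁿ}∘[·,·], α^{2ⁿ}) is a
Hom-Malcev algebra. -/
theorem derived_malcev_composition_is_hom_malcev
    {K : Type*} [Field K] [CharZero K] {A : Type*} [AddCommGroup A] [Module K A]
    (br : A →ₗ[K] A →ₗ[K] A)
    (hskew : ∀ x y : A, br x y = - br y x)
    (J : A → A → A → A)
    (hJ : ∀ x y z : A, J x y z = br (br x y) z + br (br y z) x + br (br z x) y)
    (hmalcev : ∀ x y z : A, J x y (br x z) = br (J x y z) x)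
    (α : A →ₗ[K] A) (hα : ∀ x y : A, α (br x y) = br (α x) (α y))
    (bn : ℕ → A → A → A)
    (hbn : ∀ (n : ℕ) (x y : A), bn n x y = (α ^ 2 ^ n) (br x y))
    (Jn : ℕ → A → A → A → A)
    (hJn : ∀ (n : ℕ) (x y z : A),
      Jn n x y z = bn n (bn n x y) ((α ^ 2 ^ n) z) + bn n (bn n y z) ((α ^ 2 ^ n) x)
        + bn n (bn n z x) ((α ^ 2 ^ n) y)) :
    ∀ (n : ℕ) (x y z : A),
      (∀ u v : A, bn n u v = - bn n v u) ∧
      Jn n ((α ^ 2 ^ n) x) ((α ^ 2 ^ n) y) (bn n x z) =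
        bn n (Jn n x y z) ((α ^ 2 ^ n) ((α ^ 2 ^ n) x)) := by

  have hpow : ∀ (k : ℕ) (x y : A), (α ^ k) (br x y) = br ((α ^ k) x) ((α ^ k) y) := by
    intro k
    induction k with
    | zero => intro x y; simp
    | succ k ih =>
      intro x y
      rw [pow_succ', Module.End.mul_apply, Module.End.mul_apply, Module.End.mul_apply, ih, hα]
  intro n x y z
  have hB : ∀ x y : A, (α ^ 2 ^ n) (br x y) = br ((α ^ 2 ^ n) x) ((α ^ 2 ^ n) y) := hpow _
  have key : ∀ a b c : A, Jn n a b c = (α ^ 2 ^ n) ((α ^ 2 ^ n) (J a b c)) := by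
    intro a b c
    simp only [hJn, hJ, hbn, map_add, hB]
  have hJB : ∀ a b c : A,
      J ((α ^ 2 ^ n) a) ((α ^ 2 ^ n) b) ((α ^ 2 ^ n) c) = (α ^ 2 ^ n) (J a b c) := by
    intro a b c
    simp only [hJ, map_add, hB]
  constructor
  · intro u v
    rw [hbn, hbn, hskew, map_neg]
  · rw [key, hbn, key, hB, hmalcev, hJB, hbn]
    simp only [← hB]
end
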